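/- arXiv:2603.22033 — 2 statements merged into one kernel-verified Lean document; each statement's English description precedes it below -/
import Mathlib

section
/- Let $W$ be a free $\mathbb{Z}$-module with finite basis $B$ containing distinct elements $a, a'$, let $V$ be a free $\mathbb{Z}$-module with finite basis $B_0$ containing a distinguished element $b$, and let $\iota, \iota' : V \to W$ be the linear maps that agree on $B_0 \setminus \{b\}$, sending it bijectively onto $B \setminus \{a, a'\}$, and satisfy $\iota(b) = a$ and $\iota'(b) = a'$. Then $(a - a') \wedge \Lambda^*(\iota)(x) = (a - a') \wedge \Lambda^*(\iota')(x)$ for every $x \in \Lambda^*(V)$; that is, the split map $x \mapsto (a - a') \wedge \Lambda^*(\iota)(x)$ does not depend on which of the two circles produced by the split is used to embed the source module. -/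
namespace ExteriorAlgebra

variable {R M N : Type*} [CommRing R] [AddCommGroup M] [Module R M] [AddCommGroup N] [Module R N]

theorem mul_ι_eq_ι_mul_involute (x : ExteriorAlgebra R M) (m : M) :
    x * ι R m = ι R m * CliffordAlgebra.involute x := by
  induction x using ExteriorAlgebra.induction with
  | algebraMap r => rw [AlgHom.commutes, Algebra.commutes]
  | ι v =>
    rw [CliffordAlgebra.involute_ι, mul_neg, eq_neg_iff_add_eq_zero, add_comm]
    exact ι_add_mul_swap m v
  | mul x y hx hy => rw [map_mul, ← mul_assoc, ← hx, mul_assoc, hy, mul_assoc]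
  | add x y hx hy => rw [add_mul, hx, hy, map_add, mul_add]

theorem ι_mul_mul_eq_zero {m : M} {y : ExteriorAlgebra R M} (h : ι R m * y = 0)
    (x : ExteriorAlgebra R M) : ι R m * (x * y) = 0 := by
  rw [← mul_assoc, ← CliffordAlgebra.involute_involute x, ← mul_ι_eq_ι_mul_involute, mul_assoc, h,
    mul_zero]

/-- The right annihilator of `ι n` is a two-sided ideal (by `ι_mul_mul_eq_zero`) containing
`ι (R ∙ n)`, hence the ideal generated by `ι (range (f - f'))`, which contains
`map f x - map f' x`. -/
theorem ι_mul_map_eq_of_sub_mem_span {f f' : M →ₗ[R] N} {n : N} (h : ∀ m, f m - f' m ∈ R ∙ n)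
    (x : ExteriorAlgebra R M) : ι R n * map f x = ι R n * map f' x := by
  rw [← sub_eq_zero, ← mul_sub]
  induction x using ExteriorAlgebra.induction with
  | algebraMap r => rw [AlgHom.commutes, AlgHom.commutes, sub_self, mul_zero]
  | ι v =>
    obtain ⟨r, hr⟩ := Submodule.mem_span_singleton.mp (h v)
    rw [map_apply_ι, map_apply_ι, ← map_sub, ← hr, map_smul, mul_smul_comm, ι_sq_zero, smul_zero]
  | mul x y hx hy =>
    have hsplit : map f (x * y) - map f' (x * y) =
        (map f x - map f' x) * map f y + map f' x * (map f y - map f' y) := by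
      rw [map_mul, map_mul]; noncomm_ring
    rw [hsplit, mul_add, ← mul_assoc, hx, zero_mul, zero_add, ι_mul_mul_eq_zero hy]
  | add x y hx hy =>
    rw [map_add, map_add, add_sub_add_comm, mul_add, hx, hy, add_zero]

end ExteriorAlgebra

theorem Module.Basis.sub_mem_span_singleton_of_forall_ne {R M N τ : Type*} [CommRing R]
    [AddCommGroup M] [Module R M] [AddCommGroup N] [Module R N] (C : Module.Basis τ R M)
    {f f' : M →ₗ[R] N} {t : τ} (h : ∀ s, s ≠ t → f (C s) = f' (C s)) (m : M) :
    f m - f' m ∈ R ∙ (f (C t) - f' (C t)) := by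
  suffices ⊤ ≤ (R ∙ (f (C t) - f' (C t))).comap (f - f') from this Submodule.mem_top
  rw [← C.span_eq, Submodule.span_le]
  rintro _ ⟨s, rfl⟩
  by_cases hs : s = t
  · subst hs
    exact Submodule.mem_span_singleton_self _
  · simp [h s hs]

theorem stmt5_general {σ τ : Type*}
    {W V : Type*} [AddCommGroup W] [Module ℤ W] [AddCommGroup V] [Module ℤ V]
    (B : Module.Basis σ ℤ W) (C : Module.Basis τ ℤ V) (i i' : σ) (t : τ)
    (e : τ → σ)
    (f f' : V →ₗ[ℤ] W)
    (hf : ∀ s, s ≠ t → f (C s) = B (e s)) (hf' : ∀ s, s ≠ t → f' (C s) = B (e s))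
    (hfb : f (C t) = B i) (hf'b : f' (C t) = B i') :
    ∀ x : ExteriorAlgebra ℤ V,
      ExteriorAlgebra.ι ℤ (B i - B i') * ExteriorAlgebra.map f x =
        ExteriorAlgebra.ι ℤ (B i - B i') * ExteriorAlgebra.map f' x := by
  have hdiff : ∀ v, f v - f' v ∈ ℤ ∙ (B i - B i') := by
    intro v
    simpa only [hfb, hf'b] using
      C.sub_mem_span_singleton_of_forall_ne (fun s hs => (hf s hs).trans (hf' s hs).symm) v
  exact ExteriorAlgebra.ι_mul_map_eq_of_sub_mem_span hdiff

/-- Let `W` be a free `ℤ`-module with finite basis `B` containing the distinct elements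
`a = B i`, `a' = B i'`, and let `V` be a free `ℤ`-module with finite basis `C` with
distinguished element `b = C t`.  Let `f, f' : V →ₗ W` agree on `C \ {b}`, sending it
bijectively onto `B \ {a, a'}` (via the index map `e`), with `f b = a` and `f' b = a'`.
Then `(a - a') ∧ Λ*(f)(x) = (a - a') ∧ Λ*(f')(x)` for every `x ∈ Λ*(V)`. -/
theorem stmt5 {σ τ : Type*} [Fintype σ] [Fintype τ]
    {W V : Type*} [AddCommGroup W] [Module ℤ W] [AddCommGroup V] [Module ℤ V]
    (B : Module.Basis σ ℤ W) (C : Module.Basis τ ℤ V) (i i' : σ) (hii : i ≠ i') (t : τ)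
    (e : τ → σ)
    (he : ∀ s, s ≠ t → e s ≠ i ∧ e s ≠ i')
    (hinj : Set.InjOn e {s | s ≠ t})
    (hsurj : ∀ j : σ, j ≠ i → j ≠ i' → ∃ s, s ≠ t ∧ e s = j)
    (f f' : V →ₗ[ℤ] W)
    (hf : ∀ s, s ≠ t → f (C s) = B (e s)) (hf' : ∀ s, s ≠ t → f' (C s) = B (e s))
    (hfb : f (C t) = B i) (hf'b : f' (C t) = B i') :
    ∀ x : ExteriorAlgebra ℤ V,
      ExteriorAlgebra.ι ℤ (B i - B i') * ExteriorAlgebra.map f x =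
        ExteriorAlgebra.ι ℤ (B i - B i') * ExteriorAlgebra.map f' x :=
  stmt5_general B C i i' t e f f' hf hf' hfb hf'b
end

section
/- Let $W$ be a free $\mathbb{Z}$-module with finite basis $B$ containing distinct elements $a, a'$, let $V$ be a free $\mathbb{Z}$-module with finite basis $B_0$, and let $\iota : V \to W$ be a linear map sending $B_0$ bijectively onto $B \setminus \{a'\}$. Then the split map $\Lambda^*(V) \to \Lambda^*(W)$, $x \mapsto (a - a') \wedge \Lambda^*(\iota)(x)$, carries the reduced subalgebra $\Lambda_\circ^*(V)$ into the reduced subalgebra $\Lambda_\circ^*(W)$. -/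
/-!
Since `ι` sends basis elements to basis elements, `ε_W ∘ ι = ε_V`, so `Λ*(ι)` maps the generators
of `Λ°*(V)` to generators of `Λ°*(W)`; and `a - a'` is itself a generator, as `ε_W (a - a') = 0`.
-/

open ExteriorAlgebra

theorem Module.Basis.constr_comp_of_apply_basis {ι κ R M N P : Type*} [CommRing R]
    [AddCommGroup M] [Module R M] [AddCommGroup N] [Module R N] [AddCommGroup P] [Module R P]
    (B : Module.Basis ι R M) (C : Module.Basis κ R N) (e : κ → ι) (f : N →ₗ[R] M)
    (hf : ∀ s, f (C s) = B (e s)) (g : ι → P) :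
    B.constr R g ∘ₗ f = C.constr R (g ∘ e) :=
  C.ext fun s => by simp [hf, Module.Basis.constr_basis]

theorem ExteriorAlgebra.map_mem_adjoin_ι_image {R M N : Type*} [CommRing R]
    [AddCommGroup M] [Module R M] [AddCommGroup N] [Module R N] (f : M →ₗ[R] N)
    {p : Submodule R M} {q : Submodule R N} (hpq : p ≤ q.comap f) {x : ExteriorAlgebra R M}
    (hx : x ∈ Algebra.adjoin R (ι R '' (p : Set M))) :
    map f x ∈ Algebra.adjoin R (ι R '' (q : Set N)) := by
  have hmap : (Algebra.adjoin R (ι R '' (p : Set M))).map (map f) ≤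
      Algebra.adjoin R (ι R '' (q : Set N)) := by
    have hcomm : ⇑(map f) ∘ ⇑(ι R) = ι R ∘ f := funext (map_apply_ι f)
    rw [AlgHom.map_adjoin, ← Set.image_comp, hcomm, Set.image_comp]
    exact Algebra.adjoin_mono (Set.image_mono (Set.image_subset_iff.mpr hpq))
  exact hmap ⟨x, hx, rfl⟩

theorem Module.Basis.sub_mem_ker_constr_const {ι R M : Type*} [CommRing R]
    [AddCommGroup M] [Module R M] (B : Module.Basis ι R M) (r : R) (i j : ι) :
    B i - B j ∈ LinearMap.ker (B.constr R fun _ => r) := by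
  simp [Module.Basis.constr_basis]

theorem stmt6_general {σ τ : Type*}
    {W V : Type*} [AddCommGroup W] [Module ℤ W] [AddCommGroup V] [Module ℤ V]
    (B : Module.Basis σ ℤ W) (C : Module.Basis τ ℤ V) (i i' : σ)
    (e : τ → σ)
    (f : V →ₗ[ℤ] W) (hf : ∀ s, f (C s) = B (e s)) :
    ∀ x ∈ Algebra.adjoin ℤ
        (ExteriorAlgebra.ι ℤ '' (LinearMap.ker (C.constr ℤ fun _ => (1 : ℤ)) : Set V)),
      ExteriorAlgebra.ι ℤ (B i - B i') * ExteriorAlgebra.map f x ∈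
        Algebra.adjoin ℤ
          (ExteriorAlgebra.ι ℤ '' (LinearMap.ker (B.constr ℤ fun _ => (1 : ℤ)) : Set W)) := by
  intro x hx
  have hker : LinearMap.ker (C.constr ℤ fun _ => (1 : ℤ)) ≤
      (LinearMap.ker (B.constr ℤ fun _ => (1 : ℤ))).comap f := by
    rw [← LinearMap.ker_comp, B.constr_comp_of_apply_basis C e f hf]
    exact le_rfl
  refine mul_mem (Algebra.subset_adjoin ⟨B i - B i', ?_, rfl⟩) (map_mem_adjoin_ι_image f hker hx)
  exact B.sub_mem_ker_constr_const 1 i i'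

/-- Let `W` be a free `ℤ`-module with finite basis `B` containing the distinct elements
`a = B i`, `a' = B i'`, let `V` be a free `ℤ`-module with finite basis `C`, and let
`f : V →ₗ W` send the basis `C` bijectively onto `B \ {a'}` (via the index map `e`).
Then the split map `x ↦ (a - a') ∧ Λ*(f)(x)` carries the reduced subalgebra
`Λ°*(V)` (the subalgebra generated by the kernel of the augmentation sending each basis
element to `1`) into the reduced subalgebra `Λ°*(W)`. -/
theorem stmt6 {σ τ : Type*} [Fintype σ] [Fintype τ]
    {W V : Type*} [AddCommGroup W] [Module ℤ W] [AddCommGroup V] [Module ℤ V]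
    (B : Module.Basis σ ℤ W) (C : Module.Basis τ ℤ V) (i i' : σ) (hii : i ≠ i')
    (e : τ → σ) (hinj : Function.Injective e) (hrange : Set.range e = {j | j ≠ i'})
    (f : V →ₗ[ℤ] W) (hf : ∀ s, f (C s) = B (e s)) :
    ∀ x ∈ Algebra.adjoin ℤ
        (ExteriorAlgebra.ι ℤ '' (LinearMap.ker (C.constr ℤ fun _ => (1 : ℤ)) : Set V)),
      ExteriorAlgebra.ι ℤ (B i - B i') * ExteriorAlgebra.map f x ∈
        Algebra.adjoin ℤ
          (ExteriorAlgebra.ι ℤ '' (LinearMap.ker (B.constr ℤ fun _ => (1 : ℤ)) : Set W)) :=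
  stmt6_general B C i i' e f hf
end
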